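/- Let α > 0 and μ ≥ 0. If α < μ(2+μ), then there exists η ∈ (0,1) at which the parametric second derivative (R₁''R₂' − R₂''R₁')/(R₂')³ of the downlink LoS boundary curve (with R₁(η) = log₂(1 + αη/(1+μ(1−η))), R₂(η) = log₂(1+α(1−η)/(1+μη))) is strictly positive; hence the rate region is non-convex. -/

import Mathlib

open Real Set

/-!
Both rate curves are `logb 2` of a ratio of affine functions `(p + q η) / (r + s η)`, whose
derivatives are explicit: the first is `(q r - p s) / ((p + q η) (r + s η) log 2)` and the second
`-(q r - p s) (q (r + s η) + s (p + q η)) / ((p + q η) (r + s η))² / log 2`. At `η = 1/2` this gives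
`R₁' > 0 > R₂'`, while both second-derivative numerators equal `α (1 + μ) (μ (2 + μ) - α) > 0`,
so `R₁'' R₂' - R₂'' R₁' < 0` and `R₂'³ < 0`.
-/

-- Also at `d = 0`, where both sides are `0` (`logb b 1 = logb b 0 = 0`).
theorem logb_one_add_div (b a d : ℝ) : logb b (1 + a / d) = logb b ((d + a) / d) := by
  rcases eq_or_ne d 0 with rfl | hd
  · simp
  · rw [add_div, div_self hd]

theorem hasDerivAt_const_add_mul (p q x : ℝ) : HasDerivAt (fun y => p + q * y) q x := by
  simpa using ((hasDerivAt_id x).const_mul q).const_add p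

noncomputable def logRatio (p q r s : ℝ) (x : ℝ) : ℝ := logb 2 ((p + q * x) / (r + s * x))

section logRatio

variable {p q r s x : ℝ}

theorem hasDerivAt_logRatio (hu : p + q * x ≠ 0) (hv : r + s * x ≠ 0) :
    HasDerivAt (logRatio p q r s) ((q * r - p * s) / ((p + q * x) * (r + s * x) * log 2)) x := by
  refine (((hasDerivAt_const_add_mul p q x).fun_div (hasDerivAt_const_add_mul r s x) hv).log
    (div_ne_zero hu hv)).div_const (log 2) |>.congr_deriv ?_
  field_simp
  ring

theorem deriv_logRatio_eventuallyEq (hu : p + q * x ≠ 0) (hv : r + s * x ≠ 0) :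
    deriv (logRatio p q r s) =ᶠ[nhds x]
      fun y => (q * r - p * s) / ((p + q * y) * (r + s * y) * log 2) := by
  have hcont : Continuous fun y => (p + q * y) * (r + s * y) := by fun_prop
  filter_upwards [hcont.continuousAt.eventually_ne (mul_ne_zero hu hv)] with y hy
  exact (hasDerivAt_logRatio (left_ne_zero_of_mul hy) (right_ne_zero_of_mul hy)).deriv

theorem deriv_logRatio (hu : p + q * x ≠ 0) (hv : r + s * x ≠ 0) :
    deriv (logRatio p q r s) x = (q * r - p * s) / ((p + q * x) * (r + s * x) * log 2) :=
  (hasDerivAt_logRatio hu hv).deriv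

theorem deriv_deriv_logRatio (hu : p + q * x ≠ 0) (hv : r + s * x ≠ 0) :
    deriv (deriv (logRatio p q r s)) x =
      -((q * r - p * s) * (q * (r + s * x) + s * (p + q * x))) /
        (((p + q * x) * (r + s * x)) ^ 2 * log 2) := by
  rw [(deriv_logRatio_eventuallyEq hu hv).deriv_eq]
  have hw := (((hasDerivAt_const_add_mul p q x).fun_mul
    (hasDerivAt_const_add_mul r s x)).mul_const (log 2))
  refine ((hasDerivAt_const x (q * r - p * s)).fun_div hw (by positivity)).deriv.trans ?_
  field_simp
  ring

end logRatio

theorem curvature_pos_of_signs {a b c d : ℝ} (ha : 0 < a) (hb : b < 0) (hc : 0 < c) (hd : 0 < d) :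
    0 < (c * b - d * a) / b ^ 3 :=
  div_pos_of_neg_of_neg (by nlinarith [mul_pos hd ha]) (Odd.pow_neg (by decide) hb)

theorem stmt_14 (α μ : ℝ) (hα : 0 < α) (hμ : 0 ≤ μ) (hcond : α < μ * (2 + μ))
    (R₁ R₂ : ℝ → ℝ)
    (hR₁ : ∀ η, R₁ η = Real.logb 2 (1 + α * η / (1 + μ * (1 - η))))
    (hR₂ : ∀ η, R₂ η = Real.logb 2 (1 + α * (1 - η) / (1 + μ * η))) :
    ∃ η ∈ Ioo (0:ℝ) 1,
      0 < (deriv (deriv R₁) η * deriv R₂ η - deriv (deriv R₂) η * deriv R₁ η)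
            / (deriv R₂ η) ^ 3 := by
  have hR₁' : R₁ = logRatio (1 + μ) (α - μ) (1 + μ) (-μ) := by
    ext η
    rw [hR₁, logb_one_add_div, logRatio]
    ring_nf
  have hR₂' : R₂ = logRatio (1 + α) (μ - α) 1 μ := by
    ext η
    rw [hR₂, logb_one_add_div, logRatio]
    ring_nf
  rw [hR₁', hR₂']
  have hu₁ : 0 < (1 + μ) + (α - μ) * (1 / 2) := by linarith
  have hv₁ : 0 < (1 + μ) + -μ * (1 / 2) := by linarith
  have hu₂ : 0 < (1 + α) + (μ - α) * (1 / 2) := by linarith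
  have hv₂ : 0 < 1 + μ * (1 / 2) := by linarith
  have hgain : 0 < α * (1 + μ) := by positivity
  have hcurv : 0 < α * (1 + μ) * (μ * (2 + μ) - α) := mul_pos hgain (by linarith)
  refine ⟨1 / 2, by norm_num, curvature_pos_of_signs ?_ ?_ ?_ ?_⟩
  · rw [deriv_logRatio hu₁.ne' hv₁.ne']
    exact div_pos (by linarith) (by positivity)
  · rw [deriv_logRatio hu₂.ne' hv₂.ne']
    exact div_neg_of_neg_of_pos (by linarith) (by positivity)
  · rw [deriv_deriv_logRatio hu₁.ne' hv₁.ne']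
    exact div_pos (by linarith) (by positivity)
  · rw [deriv_deriv_logRatio hu₂.ne' hv₂.ne']
    exact div_pos (by linarith) (by positivity)
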